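/- arXiv:2605.25253 — 2 statements merged into one kernel-verified Lean document; each statement's English description precedes it below -/
import Mathlib

section
/- Universality of the suffix presentation: if (M, K, ψ) is a presentation of L with ψ : C-morphisms → M a surjective module homomorphism and ψ⁻¹(K) = L, then the map f(m) = {Q | P∘Q ∈ L}, where P is any morphism with ψ(P) = m, is well-defined (independent of the choice of P), is a module homomorphism, satisfies f∘ψ = (P ↦ P\L), f(M) = suff(L), and f(K) = {P\L | P ∈ L}. -/
open CategoryTheory

universe u v

structure CMod (C : Type u) [Category.{v} C] where
  carrier : Type (max u v)
  src : carrier → C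
  tgt : carrier → C
  act : ∀ (m : carrier) {W : C}, (tgt m ⟶ W) → carrier
  src_act : ∀ (m : carrier) {W : C} (f : tgt m ⟶ W), src (act m f) = src m
  tgt_act : ∀ (m : carrier) {W : C} (f : tgt m ⟶ W), tgt (act m f) = W
  act_id : ∀ m : carrier, act m (𝟙 (tgt m)) = m
  act_comp : ∀ (m : carrier) {W T : C} (f : tgt m ⟶ W) (g : W ⟶ T),
    act m (f ≫ g) = act (act m f) (eqToHom (tgt_act m f) ≫ g)

structure CModHom {C : Type u} [Category.{v} C] (M N : CMod C) where
  toFun : M.carrier → N.carrier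
  src_eq : ∀ m, N.src (toFun m) = M.src m
  tgt_eq : ∀ m, N.tgt (toFun m) = M.tgt m
  map_act : ∀ (m : M.carrier) {W : C} (f : M.tgt m ⟶ W),
    toFun (M.act m f) = N.act (toFun m) (eqToHom (tgt_eq m) ≫ f)

/-- The morphisms of `C` form a `C`-module under composition. -/
def morMod (C : Type u) [Category.{v} C] : CMod C where
  carrier := Σ (U V : C), U ⟶ V
  src x := x.1
  tgt x := x.2.1
  act x {W} f := ⟨x.1, W, x.2.2 ≫ f⟩
  src_act := fun _ _ _ => rfl
  tgt_act := fun _ _ _ => rfl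
  act_id x := by obtain ⟨U, V, f⟩ := x; simp
  act_comp x {W T} f g := by obtain ⟨U, V, P⟩ := x; simp

/-- The prefix quotient `P\L`, packaged with its source and target objects. -/
def prefQuotB {C : Type u} [Category.{v} C] (L : ∀ ⦃U V : C⦄, (U ⟶ V) → Prop)
    {U V : C} (P : U ⟶ V) : Σ (U' V' : C), Set (Σ W : C, V' ⟶ W) :=
  ⟨U, V, {Q | L (P ≫ Q.2)}⟩

/-- The action of a morphism on a packaged prefix quotient. -/
def qact {C : Type u} [Category.{v} C] (x : Σ (U' V' : C), Set (Σ W : C, V' ⟶ W))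
    {W' : C} (g : x.2.1 ⟶ W') : Σ (U' V' : C), Set (Σ W : C, V' ⟶ W) :=
  ⟨x.1, W', {R | (⟨R.1, g ≫ R.2⟩ : Σ W : C, x.2.1 ⟶ W) ∈ x.2.2}⟩

lemma sig_ext {C : Type u} [Category.{v} C]
    (x y : Σ (U' V' : C), Set (Σ W : C, V' ⟶ W))
    (h1 : x.1 = y.1) (h2 : x.2.1 = y.2.1)
    (hset : ∀ (W : C) (q : y.2.1 ⟶ W),
      (⟨W, eqToHom h2 ≫ q⟩ : Σ W : C, x.2.1 ⟶ W) ∈ x.2.2 ↔ (⟨W, q⟩ : Σ W : C, y.2.1 ⟶ W) ∈ y.2.2) :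
    x = y := by
  obtain ⟨U, V, S⟩ := x
  obtain ⟨U', V', S'⟩ := y
  dsimp at h1 h2
  subst h1; subst h2
  have : S = S' := by
    ext ⟨W, q⟩
    simpa using hset W q
  rw [this]

/-- Universality of the canonical suffix presentation: any surjective presentation
`(M, K, ψ)` of `L` maps onto the suffix presentation via `f(m) = ψ⁻¹(m)\L`, which is
well-defined, a module homomorphism, satisfies `f ∘ ψ = (P ↦ P\L)`,
`f(M) = suff(L)` and `f(K) = {P\L | P ∈ L}`. -/
theorem suffix_presentation_universal {C : Type u} [Category.{v} C]
    (L : ∀ ⦃U V : C⦄, (U ⟶ V) → Prop)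
    (M : CMod C) (K : Set M.carrier) (ψ : CModHom (morMod C) M)
    (hsurj : Function.Surjective ψ.toFun)
    (hrec : ∀ {U V : C} (P : U ⟶ V), L P ↔ ψ.toFun ⟨U, V, P⟩ ∈ K) :
    ∃ (f : M.carrier → Σ (U' V' : C), Set (Σ W : C, V' ⟶ W))
      (h : ∀ m, (f m).1 = M.src m ∧ (f m).2.1 = M.tgt m),
      (∀ {U V : C} (P : U ⟶ V), f (ψ.toFun ⟨U, V, P⟩) = prefQuotB L P) ∧
      (∀ (m : M.carrier) {W : C} (g : M.tgt m ⟶ W),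
        f (M.act m g) = qact (f m) (eqToHom (h m).2 ≫ g)) ∧
      (Set.range f = {x | ∃ (U V : C) (P : U ⟶ V), x = prefQuotB L P}) ∧
      (f '' K = {x | ∃ (U V : C) (P : U ⟶ V), L P ∧ x = prefQuotB L P}) := by
  classical
  set f : M.carrier → Σ (U' V' : C), Set (Σ W : C, V' ⟶ W) :=
    fun m => ⟨M.src m, M.tgt m, {Q | M.act m Q.2 ∈ K}⟩ with hf
  have hψ : ∀ {U V : C} (P : U ⟶ V), f (ψ.toFun ⟨U, V, P⟩) = prefQuotB L P := by
    intro U V P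
    refine sig_ext _ _ (ψ.src_eq _) (ψ.tgt_eq _) ?_
    intro W q
    show M.act (ψ.toFun ⟨U, V, P⟩) _ ∈ K ↔ L (P ≫ q)
    rw [hrec (P ≫ q)]
    have := ψ.map_act ⟨U, V, P⟩ q
    rw [show ((morMod C).act ⟨U, V, P⟩ q) = (⟨U, W, P ≫ q⟩ : (morMod C).carrier) from rfl] at this
    exact (congrArg (· ∈ K) this).symm.to_iff
  refine ⟨f, fun m => ⟨rfl, rfl⟩, fun {U V} P => hψ P, ?_, ?_, ?_⟩
  · intro m W g
    refine sig_ext _ _ (M.src_act m g) (M.tgt_act m g) ?_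
    intro W' q
    show M.act (M.act m g) (eqToHom (M.tgt_act m g) ≫ q) ∈ K ↔
      M.act m ((eqToHom rfl ≫ g) ≫ q) ∈ K
    rw [eqToHom_refl, Category.id_comp, M.act_comp m g q]
  · ext x
    constructor
    · rintro ⟨m, rfl⟩
      obtain ⟨⟨U, V, P⟩, rfl⟩ := hsurj m
      exact ⟨U, V, P, hψ P⟩
    · rintro ⟨U, V, P, rfl⟩
      exact ⟨ψ.toFun ⟨U, V, P⟩, hψ P⟩
  · ext x
    constructor
    · rintro ⟨m, hm, rfl⟩
      obtain ⟨⟨U, V, P⟩, rfl⟩ := hsurj m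
      exact ⟨U, V, P, (hrec P).mpr hm, hψ P⟩
    · rintro ⟨U, V, P, hP, rfl⟩
      exact ⟨ψ.toFun ⟨U, V, P⟩, (hrec P).mp hP, hψ P⟩
end

section
/- If a set of morphisms L of a category C is recognized by a finite presentation (M, K, ψ) with ψ surjective, then the set suff(L) = {P\L | P a morphism of C} of prefix quotients of L is finite, of cardinality at most |M|. -/
open CategoryTheory

universe u v

/-- If `L` is recognized by a finite presentation `(M, K, ψ)` with `ψ` surjective,
then the set `suff(L)` of prefix quotients of `L` is finite, of cardinality at
most `|M|`. -/
theorem suff_finite_of_finite_presentation {C : Type u} [Category.{v} C]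
    (L : ∀ ⦃U V : C⦄, (U ⟶ V) → Prop)
    (M : CMod C) [Finite M.carrier] (K : Set M.carrier) (ψ : CModHom (morMod C) M)
    (hsurj : Function.Surjective ψ.toFun)
    (hrec : ∀ {U V : C} (P : U ⟶ V), L P ↔ ψ.toFun ⟨U, V, P⟩ ∈ K) :
    ({x : Σ V' : C, Set (Σ W : C, V' ⟶ W) |
        ∃ (U V : C) (P : U ⟶ V), x = ⟨V, {Q | L (P ≫ Q.2)}⟩}).Finite ∧
    Nat.card ({x : Σ V' : C, Set (Σ W : C, V' ⟶ W) |
        ∃ (U V : C) (P : U ⟶ V), x = ⟨V, {Q | L (P ≫ Q.2)}⟩} : Set _)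
      ≤ Nat.card M.carrier := by
  classical
  set S : Set (Σ V' : C, Set (Σ W : C, V' ⟶ W)) :=
    {x | ∃ (U V : C) (P : U ⟶ V), x = ⟨V, {Q | L (P ≫ Q.2)}⟩} with hS
  set F : M.carrier → (Σ V' : C, Set (Σ W : C, V' ⟶ W)) :=
    fun m => ⟨M.tgt m, {Q | M.act m Q.2 ∈ K}⟩ with hF
  have lem : ∀ (m : M.carrier) (V : C) (h : M.tgt m = V)
      (s : Set (Σ W : C, V ⟶ W)),
      (∀ (W : C) (Q : V ⟶ W), (⟨W, Q⟩ : Σ W : C, V ⟶ W) ∈ s ↔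
        M.act m (eqToHom h ≫ Q) ∈ K) → F m = ⟨V, s⟩ := by
    rintro m V rfl s hs
    simp only [hF]
    congr 1
    ext ⟨W, Q⟩
    have := (hs W Q).symm
    simpa using this
  have hsub : S ⊆ Set.range F := by
    rintro x ⟨U, V, P, rfl⟩
    refine ⟨ψ.toFun ⟨U, V, P⟩, ?_⟩
    refine lem _ _ (ψ.tgt_eq ⟨U, V, P⟩) _ ?_
    intro W Q
    have hm := ψ.map_act ⟨U, V, P⟩ (W := W) Q
    have e : ψ.toFun ⟨U, W, P ≫ Q⟩
        = M.act (ψ.toFun ⟨U, V, P⟩) (eqToHom (ψ.tgt_eq ⟨U, V, P⟩) ≫ Q) := hm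
    exact (hrec (P ≫ Q)).trans (by rw [e])
  have hrange : (Set.range F).Finite := Set.finite_range F
  have hfin : S.Finite := hrange.subset hsub
  refine ⟨hfin, ?_⟩
  calc Nat.card S ≤ Nat.card (Set.range F) := by
        have : Finite (Set.range F) := hrange
        exact Nat.card_le_card_of_injective
          (Set.inclusion hsub) (Set.inclusion_injective hsub)
    _ ≤ Nat.card M.carrier := by
        exact Nat.card_le_card_of_surjective
          (Set.rangeFactorization F) Set.rangeFactorization_surjective
end
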